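/- arXiv:1503.09079 — 6 statements merged into one kernel-verified Lean document; each statement's English description precedes it below -/
import Mathlib

section
/- Let s : ℝ → ℝ, let h₀ : ℝ → ℝ be differentiable, let E : ℝ → ℝ → ℝ be continuously differentiable and satisfy ∂E/∂t (t,h) = s(E(t,h)) and E(0,h) = h for all t, h ∈ ℝ, and let F : ℝ → ℝ → ℝ be continuously differentiable and satisfy ∂F/∂t (t,h) = E(t,h) and F(0,h) = 0 for all t, h ∈ ℝ. Suppose y : ℝ × ℝ → ℝ is differentiable and satisfies the implicit relation x = y(x,t) + F(t, h₀(y(x,t))) for all (x,t), and that 1 + (∂F/∂h)(t, h₀(y(x,t))) · h₀'(y(x,t)) ≠ 0 for all (x,t). Then the function q(x,t) := E(t, h₀(y(x,t))) satisfies ∂q/∂t (x,t) + q(x,t) · ∂q/∂x (x,t) = s(q(x,t)) for all (x,t), and q(x,0) = h₀(x) for all x. -/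
/-!
Write `η = y(x, t)` for the foot of the characteristic through `(x, t)`, so that
`q = E(t, h₀ η)`. Differentiating the characteristic relation `η + F(t, h₀ η) = x` in `t` and
in `x`, and using `∂ₜF = E`, gives `(1 + ∂ₕF · h₀') (∂ₜη + q ∂ₓη) = 0`: the foot is transported
with velocity `q`. The chain rule then gives
`∂ₜq + q ∂ₓq = s(q) + ∂ₕE · h₀' · (∂ₜη + q ∂ₓη) = s(q)`. At `t = 0`, `F = 0` forces `η = x`.
-/

open Function

section PartialDerivatives

variable {𝕜 : Type*} [NontriviallyNormedField 𝕜] {f : 𝕜 → 𝕜 → 𝕜}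

theorem DifferentiableAt.hasDerivAt_uncurry_left {t η : 𝕜}
    (hf : DifferentiableAt 𝕜 (uncurry f) (t, η)) :
    HasDerivAt (f · η) (fderiv 𝕜 (uncurry f) (t, η) (1, 0)) t :=
  hf.hasFDerivAt.comp_hasDerivAt (f := fun τ => (τ, η)) t
    ((hasDerivAt_id' t).prodMk (hasDerivAt_const t η))

theorem DifferentiableAt.hasDerivAt_uncurry_right {t η : 𝕜}
    (hf : DifferentiableAt 𝕜 (uncurry f) (t, η)) :
    HasDerivAt (f t) (fderiv 𝕜 (uncurry f) (t, η) (0, 1)) η :=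
  hf.hasFDerivAt.comp_hasDerivAt (f := fun η => (t, η)) η
    ((hasDerivAt_const η t).prodMk (hasDerivAt_id' η))

theorem DifferentiableAt.hasDerivAt_uncurry_comp {c : 𝕜 → 𝕜} {c' t : 𝕜}
    (hf : DifferentiableAt 𝕜 (uncurry f) (t, c t)) (hc : HasDerivAt c c' t) :
    HasDerivAt (fun τ => f τ (c τ)) (deriv (f · (c t)) t + deriv (f t) (c t) * c') t := by
  have hcurve : HasDerivAt (fun τ => f τ (c τ)) (fderiv 𝕜 (uncurry f) (t, c t) (1, c')) t :=
    hf.hasFDerivAt.comp_hasDerivAt (f := fun τ => (τ, c τ)) t ((hasDerivAt_id' t).prodMk hc)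
  have hsplit : ((1 : 𝕜), c') = (1, 0) + c' • (0, 1) := by simp
  rwa [hsplit, map_add, map_smul, smul_eq_mul, mul_comm, ← hf.hasDerivAt_uncurry_left.deriv,
    ← hf.hasDerivAt_uncurry_right.deriv] at hcurve

theorem Differentiable.uncurry_comp_right {g : 𝕜 → 𝕜} (hf : Differentiable 𝕜 (uncurry f))
    (hg : Differentiable 𝕜 g) :
    Differentiable 𝕜 (uncurry fun t η => f t (g η)) :=
  hf.comp (differentiable_fst.prodMk (hg.comp differentiable_snd))

end PartialDerivatives

section Transport

variable {𝕜 : Type*} [NontriviallyNormedField 𝕜] {y : 𝕜 × 𝕜 → 𝕜} {x t : 𝕜}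

theorem DifferentiableAt.hasDerivAt_apply_space (hy : DifferentiableAt 𝕜 y (x, t)) :
    HasDerivAt (fun ξ => y (ξ, t)) (deriv (fun ξ => y (ξ, t)) x) x :=
  (hy.comp x (differentiableAt_id.prodMk (differentiableAt_const t))).hasDerivAt

theorem DifferentiableAt.hasDerivAt_apply_time (hy : DifferentiableAt 𝕜 y (x, t)) :
    HasDerivAt (fun τ => y (x, τ)) (deriv (fun τ => y (x, τ)) t) t :=
  (hy.comp t ((differentiableAt_const x).prodMk differentiableAt_id)).hasDerivAt

theorem deriv_time_add_mul_deriv_space_comp {G : 𝕜 → 𝕜 → 𝕜} (a : 𝕜)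
    (hG : DifferentiableAt 𝕜 (uncurry G) (t, y (x, t))) (hy : DifferentiableAt 𝕜 y (x, t)) :
    deriv (fun τ => G τ (y (x, τ))) t + a * deriv (fun ξ => G t (y (ξ, t))) x
      = deriv (G · (y (x, t))) t + deriv (G t) (y (x, t))
          * (deriv (fun τ => y (x, τ)) t + a * deriv (fun ξ => y (ξ, t)) x) := by
  have htime := hG.hasDerivAt_uncurry_comp hy.hasDerivAt_apply_time
  have hspace : HasDerivAt (fun ξ => G t (y (ξ, t)))
      (deriv (G t) (y (x, t)) * deriv (fun ξ => y (ξ, t)) x) x :=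
    hG.hasDerivAt_uncurry_right.differentiableAt.hasDerivAt.comp x hy.hasDerivAt_apply_space
  rw [htime.deriv, hspace.deriv]
  ring

theorem deriv_time_add_mul_deriv_space_eq_zero {Φ : 𝕜 → 𝕜 → 𝕜}
    (hrel : ∀ x t, Φ t (y (x, t)) = x) (hΦ : DifferentiableAt 𝕜 (uncurry Φ) (t, y (x, t)))
    (hy : DifferentiableAt 𝕜 y (x, t)) (hne : deriv (Φ t) (y (x, t)) ≠ 0) :
    deriv (fun τ => y (x, τ)) t + deriv (Φ · (y (x, t))) t * deriv (fun ξ => y (ξ, t)) x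
      = 0 := by
  -- Applied to `G = Φ`, the left side is `∂ₜΦ` because `Φ t (y (x, t)) = x`.
  have h := deriv_time_add_mul_deriv_space_comp (deriv (Φ · (y (x, t))) t) hΦ hy
  simp only [hrel, deriv_const, deriv_id'', zero_add, mul_one, left_eq_add] at h
  exact (mul_eq_zero.mp h).resolve_left hne

end Transport

/-- Proposition 1: `q(x,t) = E (t, h₀ (y (x,t)))` solves the Burgers equation
with source term `s`, where `E` solves the equivalent ODE, `F` is the primitive
of `E` in `t`, and `y` satisfies the characteristic relation. -/
theorem stmt_2 (s : ℝ → ℝ) (h₀ : ℝ → ℝ) (hh₀ : Differentiable ℝ h₀)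
    (E F : ℝ → ℝ → ℝ)
    (hE : ContDiff ℝ 1 (fun p : ℝ × ℝ => E p.1 p.2))
    (hEt : ∀ t h : ℝ, deriv (fun t => E t h) t = s (E t h))
    (hE0 : ∀ h : ℝ, E 0 h = h)
    (hF : ContDiff ℝ 1 (fun p : ℝ × ℝ => F p.1 p.2))
    (hFt : ∀ t h : ℝ, deriv (fun t => F t h) t = E t h)
    (hF0 : ∀ h : ℝ, F 0 h = 0)
    (y : ℝ × ℝ → ℝ) (hy : Differentiable ℝ y)
    (hrel : ∀ x t : ℝ, x = y (x, t) + F t (h₀ (y (x, t))))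
    (hne : ∀ x t : ℝ,
      1 + deriv (fun h => F t h) (h₀ (y (x, t))) * deriv h₀ (y (x, t)) ≠ 0) :
    (∀ x t : ℝ,
        deriv (fun τ => E τ (h₀ (y (x, τ)))) t
          + E t (h₀ (y (x, t))) * deriv (fun ξ => E t (h₀ (y (ξ, t)))) x
          = s (E t (h₀ (y (x, t))))) ∧
      ∀ x : ℝ, E 0 (h₀ (y (x, 0))) = h₀ x := by
  have hEd : Differentiable ℝ (uncurry E) := hE.differentiable one_ne_zero
  have hFd : Differentiable ℝ (uncurry F) := hF.differentiable one_ne_zero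
  refine ⟨fun x t => ?_, fun x => ?_⟩
  · set η := y (x, t)
    have hΦt : deriv (fun τ => η + F τ (h₀ η)) t = E t (h₀ η) := by
      rw [deriv_const_add, hFt]
    have hΦη : HasDerivAt (fun η => η + F t (h₀ η)) (1 + deriv (F t) (h₀ η) * deriv h₀ η) η :=
      (hasDerivAt_id' η).add
        ((hFd _).hasDerivAt_uncurry_right.differentiableAt.hasDerivAt.comp η (hh₀ η).hasDerivAt)
    have hchar := deriv_time_add_mul_deriv_space_eq_zero (Φ := fun t η => η + F t (h₀ η))
      (fun x t => (hrel x t).symm) ((differentiable_snd.add (hFd.uncurry_comp_right hh₀)) _)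
      (hy _) (hΦη.deriv ▸ hne x t)
    rw [hΦt] at hchar
    calc _ = s (E t (h₀ η)) + deriv (fun η => E t (h₀ η)) η
          * (deriv (fun τ => y (x, τ)) t + E t (h₀ η) * deriv (fun ξ => y (ξ, t)) x) := by
          rw [← hEt]
          exact deriv_time_add_mul_deriv_space_comp (G := fun t η => E t (h₀ η)) _
            (hEd.uncurry_comp_right hh₀ _) (hy _)
      _ = s (E t (h₀ η)) := by rw [hchar, mul_zero, add_zero]
  · have hy0 : y (x, 0) = x := by linarith [hrel x 0, hF0 (h₀ (y (x, 0)))]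
    rw [hy0, hE0]
end

section
/- Under the hypotheses of Proposition 1 — h₀ : ℝ → ℝ differentiable, F : ℝ → ℝ → ℝ continuously differentiable with ∂F/∂t (t,h) = E(t,h), y : ℝ × ℝ → ℝ differentiable satisfying x = y(x,t) + F(t, h₀(y(x,t))) for all (x,t), and 1 + (∂F/∂h)(t, h₀(y(x,t))) · h₀'(y(x,t)) ≠ 0 — the function y is transported by the characteristic speed q(x,t) := E(t, h₀(y(x,t))): that is, ∂y/∂t (x,t) + q(x,t) · ∂y/∂x (x,t) = 0 for all (x,t). -/
/-!
Differentiating the characteristic relation `x = y + F(t, h₀(y))` in `t` and in `x` gives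
`y_t (1 + F_h h₀'(y)) = -E` and `y_x (1 + F_h h₀'(y)) = 1`; adding `E` times the second to the
first shows that `(y_t + E y_x)(1 + F_h h₀'(y)) = 0`, and the second factor does not vanish.
-/

theorem DifferentiableAt.hasDerivAt_comp₂ {f : ℝ → ℝ → ℝ} {u v : ℝ → ℝ} {s u' v' : ℝ}
    (hf : DifferentiableAt ℝ (fun p : ℝ × ℝ => f p.1 p.2) (u s, v s))
    (hu : HasDerivAt u u' s) (hv : HasDerivAt v v' s) :
    HasDerivAt (fun σ => f (u σ) (v σ))
      (u' * deriv (fun τ => f τ (v s)) (u s) + v' * deriv (fun η => f (u s) η) (v s)) s := by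
  set A := fderiv ℝ (fun p : ℝ × ℝ => f p.1 p.2) (u s, v s)
  have hA : HasFDerivAt (fun p : ℝ × ℝ => f p.1 p.2) A (u s, v s) := hf.hasFDerivAt
  have h₁ : HasDerivAt (fun τ => f τ (v s)) (A (1, 0)) (u s) := by
    exact hA.comp_hasDerivAt (u s) ((hasDerivAt_id' (u s)).prodMk (hasDerivAt_const (u s) (v s)))
  have h₂ : HasDerivAt (fun η => f (u s) η) (A (0, 1)) (v s) := by
    exact hA.comp_hasDerivAt (v s) ((hasDerivAt_const (v s) (u s)).prodMk (hasDerivAt_id' (v s)))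
  have hsplit : ((u', v') : ℝ × ℝ) = u' • (1, 0) + v' • (0, 1) := by simp
  have hcomp := hA.comp_hasDerivAt s (hu.prodMk hv)
  rwa [hsplit, map_add, map_smul, map_smul, ← h₁.deriv, ← h₂.deriv] at hcomp

section Characteristics

variable {h₀ : ℝ → ℝ} {F : ℝ → ℝ → ℝ} {y : ℝ × ℝ → ℝ} {x t : ℝ}

theorem deriv_time_mul_of_characteristic (hh₀ : DifferentiableAt ℝ h₀ (y (x, t)))
    (hF : DifferentiableAt ℝ (fun p : ℝ × ℝ => F p.1 p.2) (t, h₀ (y (x, t))))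
    (hy : DifferentiableAt ℝ y (x, t))
    (hrel : ∀ τ : ℝ, x = y (x, τ) + F τ (h₀ (y (x, τ)))) :
    deriv (fun τ => y (x, τ)) t
        * (1 + deriv (fun η => F t η) (h₀ (y (x, t))) * deriv h₀ (y (x, t)))
      = -deriv (fun τ => F τ (h₀ (y (x, t)))) t := by
  have hyt : HasDerivAt (fun τ => y (x, τ)) (deriv (fun τ => y (x, τ)) t) t :=
    (hy.comp t ((hasDerivAt_const t x).prodMk (hasDerivAt_id t)).differentiableAt).hasDerivAt
  have hsum : HasDerivAt (fun τ => y (x, τ) + F τ (h₀ (y (x, τ))))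
      (deriv (fun τ => y (x, τ)) t + (1 * deriv (fun τ => F τ (h₀ (y (x, t)))) t
        + deriv h₀ (y (x, t)) * deriv (fun τ => y (x, τ)) t
          * deriv (fun η => F t η) (h₀ (y (x, t))))) t :=
    hyt.add (hF.hasDerivAt_comp₂ (hasDerivAt_id' t) (hh₀.hasDerivAt.comp t hyt))
  have hconst : (fun τ => y (x, τ) + F τ (h₀ (y (x, τ)))) = fun _ => x :=
    funext fun τ => (hrel τ).symm
  rw [hconst] at hsum
  linear_combination hsum.unique (hasDerivAt_const t x)

theorem deriv_space_mul_of_characteristic (hh₀ : DifferentiableAt ℝ h₀ (y (x, t)))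
    (hF : DifferentiableAt ℝ (fun p : ℝ × ℝ => F p.1 p.2) (t, h₀ (y (x, t))))
    (hy : DifferentiableAt ℝ y (x, t))
    (hrel : ∀ ξ : ℝ, ξ = y (ξ, t) + F t (h₀ (y (ξ, t)))) :
    deriv (fun ξ => y (ξ, t)) x
        * (1 + deriv (fun η => F t η) (h₀ (y (x, t))) * deriv h₀ (y (x, t))) = 1 := by
  have hyx : HasDerivAt (fun ξ => y (ξ, t)) (deriv (fun ξ => y (ξ, t)) x) x :=
    (hy.comp x ((hasDerivAt_id x).prodMk (hasDerivAt_const x t)).differentiableAt).hasDerivAt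
  have hsum : HasDerivAt (fun ξ => y (ξ, t) + F t (h₀ (y (ξ, t))))
      (deriv (fun ξ => y (ξ, t)) x + (0 * deriv (fun τ => F τ (h₀ (y (x, t)))) t
        + deriv h₀ (y (x, t)) * deriv (fun ξ => y (ξ, t)) x
          * deriv (fun η => F t η) (h₀ (y (x, t))))) x :=
    hyx.add (hF.hasDerivAt_comp₂ (hasDerivAt_const x t) (hh₀.hasDerivAt.comp x hyx))
  have hid : (fun ξ => y (ξ, t) + F t (h₀ (y (ξ, t)))) = fun ξ => ξ :=
    funext fun ξ => (hrel ξ).symm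
  rw [hid] at hsum
  linear_combination hsum.unique (hasDerivAt_id' x)

end Characteristics

/-- Key identity in the proof of Proposition 1: the foot of the characteristic
`y` is transported by the characteristic speed `q(x,t) = E (t, h₀ (y (x,t)))`. -/
theorem stmt_3 (h₀ : ℝ → ℝ) (hh₀ : Differentiable ℝ h₀)
    (E F : ℝ → ℝ → ℝ)
    (hF : ContDiff ℝ 1 (fun p : ℝ × ℝ => F p.1 p.2))
    (hFt : ∀ t h : ℝ, deriv (fun t => F t h) t = E t h)
    (y : ℝ × ℝ → ℝ) (hy : Differentiable ℝ y)
    (hrel : ∀ x t : ℝ, x = y (x, t) + F t (h₀ (y (x, t))))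
    (hne : ∀ x t : ℝ,
      1 + deriv (fun h => F t h) (h₀ (y (x, t))) * deriv h₀ (y (x, t)) ≠ 0) :
    ∀ x t : ℝ,
      deriv (fun τ => y (x, τ)) t
        + E t (h₀ (y (x, t))) * deriv (fun ξ => y (ξ, t)) x = 0 := by
  intro x t
  have hFd := hF.differentiable one_ne_zero
  have htime := deriv_time_mul_of_characteristic (hh₀ (y (x, t))) (hFd _) (hy _) (hrel x)
  have hspace := deriv_space_mul_of_characteristic (hh₀ (y (x, t))) (hFd _) (hy _) (hrel · t)
  rw [hFt] at htime
  refine (mul_eq_zero.mp ?_).resolve_right (hne x t)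
  linear_combination htime + E t (h₀ (y (x, t))) * hspace
end

section
/- Let β ∈ ℝ with β ≠ 0, let h₀ : ℝ → ℝ be differentiable, and let y : ℝ × ℝ → ℝ be differentiable and satisfy x = y(x,t) + ((exp(β t) − 1)/β) · h₀(y(x,t)) for all (x,t), with 1 + ((exp(β t) − 1)/β) · h₀'(y(x,t)) ≠ 0 for all (x,t). Then q(x,t) := h₀(y(x,t)) · exp(β t) satisfies ∂q/∂t (x,t) + q(x,t) · ∂q/∂x (x,t) = β · q(x,t) for all (x,t), and q(x,0) = h₀(x) for all x. -/
/-!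
Differentiating the characteristic relation `x = y + a(t) h₀(y)`, with `a(t) = (e^{βt} - 1)/β`,
in `t` and in `x` gives `(1 + a h₀'(y)) y_t = -e^{βt} h₀(y)` and `(1 + a h₀'(y)) y_x = 1`.
Since `1 + a h₀'(y) ≠ 0` this yields `y_t + q y_x = 0`, i.e. `y` is constant along the
characteristics, and then `q_t + q q_x - β q = h₀'(y) e^{βt} (y_t + q y_x) = 0`.
-/

open Real

lemma hasDerivAt_exp_mul_sub_one_div {β : ℝ} (hβ : β ≠ 0) (t : ℝ) :
    HasDerivAt (fun τ => (exp (β * τ) - 1) / β) (exp (β * t)) t := by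
  have h := ((((hasDerivAt_id t).const_mul β).exp).sub_const 1).div_const β
  simpa [mul_div_assoc, mul_div_cancel_right₀ _ hβ] using h

lemma mul_deriv_eq_of_implicit {f g a c : ℝ → ℝ} {s a' c' : ℝ}
    (hf : DifferentiableAt ℝ f (g s)) (hg : DifferentiableAt ℝ g s)
    (ha : HasDerivAt a a' s) (hc : HasDerivAt c c' s)
    (hrel : ∀ σ, c σ = g σ + a σ * f (g σ)) :
    (1 + a s * deriv f (g s)) * deriv g s = c' - a' * f (g s) := by
  have hrhs : HasDerivAt (fun σ => g σ + a σ * f (g σ))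
      (deriv g s + (a' * f (g s) + a s * (deriv f (g s) * deriv g s))) s :=
    hg.hasDerivAt.add (ha.mul (hf.hasDerivAt.comp s hg.hasDerivAt))
  rw [← funext hrel] at hrhs
  linear_combination hrhs.unique hc

/-- Section 4: the Burgers equation with linear source term `β q` is solved by
`q(x,t) = h₀(y) e^{βt}` with `x = y + ((e^{βt} - 1)/β) h₀(y)`. -/
theorem stmt_7 (β : ℝ) (hβ : β ≠ 0) (h₀ : ℝ → ℝ) (hh₀ : Differentiable ℝ h₀)
    (y : ℝ × ℝ → ℝ) (hy : Differentiable ℝ y)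
    (hrel : ∀ x t : ℝ, x = y (x, t) + (Real.exp (β * t) - 1) / β * h₀ (y (x, t)))
    (hne : ∀ x t : ℝ, 1 + (Real.exp (β * t) - 1) / β * deriv h₀ (y (x, t)) ≠ 0) :
    (∀ x t : ℝ,
        deriv (fun τ => h₀ (y (x, τ)) * Real.exp (β * τ)) t
          + h₀ (y (x, t)) * Real.exp (β * t)
            * deriv (fun ξ => h₀ (y (ξ, t)) * Real.exp (β * t)) x
          = β * (h₀ (y (x, t)) * Real.exp (β * t))) ∧
      ∀ x : ℝ, h₀ (y (x, 0)) * Real.exp (β * 0) = h₀ x := by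
  refine ⟨fun x t => ?_, fun x => by simpa using congrArg h₀ (hrel x 0).symm⟩
  have hy_t : DifferentiableAt ℝ (fun τ => y (x, τ)) t := (hy (x, t)).comp t (by fun_prop)
  have hy_x : DifferentiableAt ℝ (fun ξ => y (ξ, t)) x := (hy (x, t)).comp x (by fun_prop)
  have implicit_t := mul_deriv_eq_of_implicit (hh₀ _) hy_t
    (hasDerivAt_exp_mul_sub_one_div hβ t) (hasDerivAt_const t x) (hrel x)
  have implicit_x := mul_deriv_eq_of_implicit (hh₀ _) hy_x
    (hasDerivAt_const x ((exp (β * t) - 1) / β)) (hasDerivAt_id x) (hrel · t)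
  have transport : deriv (fun τ => y (x, τ)) t
      + h₀ (y (x, t)) * exp (β * t) * deriv (fun ξ => y (ξ, t)) x = 0 := by
    refine mul_left_cancel₀ (hne x t) ?_
    linear_combination implicit_t + h₀ (y (x, t)) * exp (β * t) * implicit_x
  have hq_t : HasDerivAt (fun τ => h₀ (y (x, τ)) * exp (β * τ))
      (deriv h₀ (y (x, t)) * deriv (fun τ => y (x, τ)) t * exp (β * t)
        + h₀ (y (x, t)) * (exp (β * t) * β)) t := by
    have hexp := ((hasDerivAt_id t).const_mul β).exp
    simp only [id, mul_one] at hexp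
    exact ((hh₀ _).hasDerivAt.comp t hy_t.hasDerivAt).mul hexp
  have hq_x : HasDerivAt (fun ξ => h₀ (y (ξ, t)) * exp (β * t))
      (deriv h₀ (y (x, t)) * deriv (fun ξ => y (ξ, t)) x * exp (β * t)) x :=
    ((hh₀ _).hasDerivAt.comp x hy_x.hasDerivAt).mul_const _
  rw [hq_t.deriv, hq_x.deriv]
  linear_combination deriv h₀ (y (x, t)) * exp (β * t) * transport
end

section
/- Let β ∈ ℝ with β ≠ 1. The function u(x,t) := β x e^{β t} / (β − 2 + e^{β t}), defined for all (x,t) with β − 2 + e^{β t} ≠ 0, satisfies ∂u/∂t (x,t) + u(x,t) · ∂u/∂x (x,t) = β · u(x,t) at every such point, and satisfies the initial condition u(x,0) = β x/(β − 1) for all x ∈ ℝ. -/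
/-!
The solution is linear in `x`: for `u(x,t) = x g(t)` the equation `∂ₜu + u ∂ₓu = β u` reduces to
the Riccati equation `g' = β g - g²`, whose solutions are the logistic curves
`g(t) = β e^{βt} / (c + e^{βt})`; the initial condition picks `c = β - 2`.
-/

open Real

theorem hasDerivAt_logistic (β c t : ℝ) (h : c + exp (β * t) ≠ 0) :
    HasDerivAt (fun τ => β * exp (β * τ) / (c + exp (β * τ)))
      (β * (β * exp (β * t) / (c + exp (β * t))) - (β * exp (β * t) / (c + exp (β * t))) ^ 2) t := by
  have hexp : HasDerivAt (fun τ => exp (β * τ)) (exp (β * t) * β) t :=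
    ((hasDerivAt_id t).const_mul β).exp.congr_deriv (by simp)
  exact ((hexp.const_mul β).div (hexp.const_add c) h).congr_deriv (by field_simp)

theorem burgers_source_of_linear_in_space {g : ℝ → ℝ} {β t : ℝ}
    (hg : HasDerivAt g (β * g t - g t ^ 2) t) (x : ℝ) :
    deriv (fun τ => x * g τ) t + x * g t * deriv (fun ξ => ξ * g t) x = β * (x * g t) := by
  rw [(hg.const_mul x).deriv, ((hasDerivAt_id' x).mul_const (g t)).deriv]
  ring

theorem stmt_8_general (β : ℝ) :
    (∀ x t : ℝ, β - 2 + Real.exp (β * t) ≠ 0 →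
        deriv (fun τ => β * x * Real.exp (β * τ) / (β - 2 + Real.exp (β * τ))) t
          + β * x * Real.exp (β * t) / (β - 2 + Real.exp (β * t))
            * deriv (fun ξ => β * ξ * Real.exp (β * t) / (β - 2 + Real.exp (β * t))) x
          = β * (β * x * Real.exp (β * t) / (β - 2 + Real.exp (β * t)))) ∧
      ∀ x : ℝ,
        β * x * Real.exp (β * 0) / (β - 2 + Real.exp (β * 0)) = β * x / (β - 1) := by
  refine ⟨fun x t hD => ?_, fun x => ?_⟩
  · have linear_in_space : ∀ ξ τ : ℝ, β * ξ * exp (β * τ) / (β - 2 + exp (β * τ))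
        = ξ * (β * exp (β * τ) / (β - 2 + exp (β * τ))) := fun ξ τ => by ring
    simp only [linear_in_space]
    exact burgers_source_of_linear_in_space (hasDerivAt_logistic β (β - 2) t hD) x
  · rw [mul_zero, exp_zero]
    ring

/-- Worked example of Section 4: `u(x,t) = β x e^{βt}/(β - 2 + e^{βt})` solves the
Burgers equation with linear source term `β u`, with `u(x,0) = β x/(β - 1)`. -/
theorem stmt_8 (β : ℝ) (hβ : β ≠ 1) :
    (∀ x t : ℝ, β - 2 + Real.exp (β * t) ≠ 0 →
        deriv (fun τ => β * x * Real.exp (β * τ) / (β - 2 + Real.exp (β * τ))) t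
          + β * x * Real.exp (β * t) / (β - 2 + Real.exp (β * t))
            * deriv (fun ξ => β * ξ * Real.exp (β * t) / (β - 2 + Real.exp (β * t))) x
          = β * (β * x * Real.exp (β * t) / (β - 2 + Real.exp (β * t)))) ∧
      ∀ x : ℝ,
        β * x * Real.exp (β * 0) / (β - 2 + Real.exp (β * 0)) = β * x / (β - 1) :=
  stmt_8_general β
end

section
/- Let β ∈ ℝ with β ≠ 0, let h₀ : ℝ → ℝ be differentiable, and let y : ℝ × ℝ → ℝ be differentiable and satisfy x = y(x,t) − ln(1 − β t h₀(y(x,t)))/β for all (x,t) in a region where 1 − β t h₀(y(x,t)) > 0. Suppose also that 1 + (∂/∂h)[−ln(1 − β t h)/β]|_{h = h₀(y(x,t))} · h₀'(y(x,t)) = 1 + (t/(1 − β t h₀(y(x,t)))) · h₀'(y(x,t)) ≠ 0 on this region. Then q(x,t) := h₀(y(x,t))/(1 − β t h₀(y(x,t))) satisfies ∂q/∂t (x,t) + q(x,t) · ∂q/∂x (x,t) = β · q(x,t)² on this region, and q(x,0) = h₀(x) for all x. -/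
/-!
Write `X(u, t) = u - log (1 - β t h₀ u) / β` for the characteristic issuing from `u` and
`G(u, t) = h₀ u / (1 - β t h₀ u)` for the value carried along it, so that `q(x, t) = G(y, t)` with
`X(y, t) = x`. The characteristic speed `∂ₜX` is exactly `G`, so differentiating `X(y, t) = x`
gives `∂ₓy · ∂ᵤX = 1` and `∂ₜy · ∂ᵤX + q = 0`, whence the transport equation `∂ₜy + q ∂ₓy = 0`.
The chain rule then leaves only `∂ₜG = β G²` in `∂ₜq + q ∂ₓq`.
-/

noncomputable section

namespace Burgers

variable (β : ℝ) (h₀ : ℝ → ℝ)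

def characteristic (u t : ℝ) : ℝ := u - Real.log (1 - β * t * h₀ u) / β

def profile (u t : ℝ) : ℝ := h₀ u / (1 - β * t * h₀ u)

variable {β h₀} {v τ : ℝ → ℝ} {v' τ' h' s : ℝ}

theorem characteristic_zero (u : ℝ) : characteristic β h₀ u 0 = u := by
  simp [characteristic]

theorem profile_zero (u : ℝ) : profile β h₀ u 0 = h₀ u := by
  simp [profile]

theorem hasDerivAt_one_sub_mul_mul (hv : HasDerivAt v v' s) (hτ : HasDerivAt τ τ' s)
    (hh : HasDerivAt h₀ h' (v s)) :
    HasDerivAt (fun s => 1 - β * τ s * h₀ (v s))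
      (-(β * τ' * h₀ (v s) + β * τ s * (h' * v'))) s :=
  ((hτ.const_mul β).mul (hh.comp s hv)).const_sub 1

theorem hasDerivAt_characteristic (hβ : β ≠ 0) (hv : HasDerivAt v v' s) (hτ : HasDerivAt τ τ' s)
    (hh : HasDerivAt h₀ h' (v s)) (hD : 1 - β * τ s * h₀ (v s) ≠ 0) :
    HasDerivAt (fun s => characteristic β h₀ (v s) (τ s))
      ((1 + τ s * h' / (1 - β * τ s * h₀ (v s))) * v' + profile β h₀ (v s) (τ s) * τ') s := by
  refine (hv.sub (((hasDerivAt_one_sub_mul_mul hv hτ hh).log hD).div_const β)).congr_deriv ?_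
  simp only [profile]
  field_simp
  ring

theorem hasDerivAt_profile (hv : HasDerivAt v v' s) (hτ : HasDerivAt τ τ' s)
    (hh : HasDerivAt h₀ h' (v s)) (hD : 1 - β * τ s * h₀ (v s) ≠ 0) :
    HasDerivAt (fun s => profile β h₀ (v s) (τ s))
      (h' / (1 - β * τ s * h₀ (v s)) ^ 2 * v' + β * profile β h₀ (v s) (τ s) ^ 2 * τ') s := by
  refine ((hh.comp s hv).div (hasDerivAt_one_sub_mul_mul hv hτ hh) hD).congr_deriv ?_
  simp only [profile, Function.comp_apply]
  field_simp
  ring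

variable {y : ℝ × ℝ → ℝ} {x t yx yt : ℝ}

section slices

variable (hyx : HasDerivAt (fun ξ => y (ξ, t)) yx x) (hyt : HasDerivAt (fun τ => y (x, τ)) yt t)
  (hh : HasDerivAt h₀ h' (y (x, t))) (hD : 1 - β * t * h₀ (y (x, t)) ≠ 0)
include hyx hyt hh hD

theorem transport_of_characteristic (hβ : β ≠ 0)
    (hrel : ∀ x t, characteristic β h₀ (y (x, t)) t = x) :
    yt + profile β h₀ (y (x, t)) t * yx = 0 := by
  have hx := hasDerivAt_characteristic hβ hyx (hasDerivAt_const x t) hh hD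
  have ht := hasDerivAt_characteristic hβ hyt (hasDerivAt_id' t) hh hD
  simp only [hrel] at hx ht
  have h_unit := hx.unique (hasDerivAt_id x)
  have h_speed := ht.unique (hasDerivAt_const t x)
  linear_combination yx * h_speed - yt * h_unit

theorem profile_comp_burgers (htransport : yt + profile β h₀ (y (x, t)) t * yx = 0) :
    deriv (fun τ => profile β h₀ (y (x, τ)) τ) t
      + profile β h₀ (y (x, t)) t * deriv (fun ξ => profile β h₀ (y (ξ, t)) t) x
      = β * profile β h₀ (y (x, t)) t ^ 2 := by
  rw [(hasDerivAt_profile hyt (hasDerivAt_id' t) hh hD).deriv,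
    (hasDerivAt_profile hyx (hasDerivAt_const x t) hh hD).deriv]
  linear_combination h' / (1 - β * t * h₀ (y (x, t))) ^ 2 * htransport

end slices

end Burgers

end

open Burgers in
theorem stmt_11_general (β : ℝ) (hβ : β ≠ 0) (h₀ : ℝ → ℝ) (hh₀ : Differentiable ℝ h₀)
    (y : ℝ × ℝ → ℝ) (hy : Differentiable ℝ y)
    (hpos : ∀ x t : ℝ, 1 - β * t * h₀ (y (x, t)) > 0)
    (hrel : ∀ x t : ℝ, x = y (x, t) - Real.log (1 - β * t * h₀ (y (x, t))) / β) :
    (∀ x t : ℝ,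
        deriv (fun τ => h₀ (y (x, τ)) / (1 - β * τ * h₀ (y (x, τ)))) t
          + h₀ (y (x, t)) / (1 - β * t * h₀ (y (x, t)))
            * deriv (fun ξ => h₀ (y (ξ, t)) / (1 - β * t * h₀ (y (ξ, t)))) x
          = β * (h₀ (y (x, t)) / (1 - β * t * h₀ (y (x, t)))) ^ 2) ∧
      ∀ x : ℝ, h₀ (y (x, 0)) / (1 - β * 0 * h₀ (y (x, 0))) = h₀ x := by
  have hchar : ∀ x t, characteristic β h₀ (y (x, t)) t = x := fun x t => (hrel x t).symm
  refine ⟨fun x t => ?_, fun x => ?_⟩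
  · have hyx := (by fun_prop : DifferentiableAt ℝ (fun ξ => y (ξ, t)) x).hasDerivAt
    have hyt := (by fun_prop : DifferentiableAt ℝ (fun τ => y (x, τ)) t).hasDerivAt
    have hh := (hh₀ (y (x, t))).hasDerivAt
    have hD := (hpos x t).ne'
    exact profile_comp_burgers hyx hyt hh hD
      (transport_of_characteristic hyx hyt hh hD hβ hchar)
  · have hy0 : y (x, 0) = x := by simpa only [characteristic_zero] using hchar x 0
    change profile β h₀ (y (x, 0)) 0 = h₀ x
    rw [profile_zero, hy0]

/-- Section 5: the Burgers equation with quadratic source term `β q²` is solved by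
`q(x,t) = h₀(y)/(1 - β t h₀(y))` with `x = y - ln(1 - β t h₀(y))/β`. -/
theorem stmt_11 (β : ℝ) (hβ : β ≠ 0) (h₀ : ℝ → ℝ) (hh₀ : Differentiable ℝ h₀)
    (y : ℝ × ℝ → ℝ) (hy : Differentiable ℝ y)
    (hpos : ∀ x t : ℝ, 1 - β * t * h₀ (y (x, t)) > 0)
    (hrel : ∀ x t : ℝ, x = y (x, t) - Real.log (1 - β * t * h₀ (y (x, t))) / β)
    (hne : ∀ x t : ℝ,
      1 + t / (1 - β * t * h₀ (y (x, t))) * deriv h₀ (y (x, t)) ≠ 0) :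
    (∀ x t : ℝ,
        deriv (fun τ => h₀ (y (x, τ)) / (1 - β * τ * h₀ (y (x, τ)))) t
          + h₀ (y (x, t)) / (1 - β * t * h₀ (y (x, t)))
            * deriv (fun ξ => h₀ (y (ξ, t)) / (1 - β * t * h₀ (y (ξ, t)))) x
          = β * (h₀ (y (x, t)) / (1 - β * t * h₀ (y (x, t)))) ^ 2) ∧
      ∀ x : ℝ, h₀ (y (x, 0)) / (1 - β * 0 * h₀ (y (x, 0))) = h₀ x :=
  stmt_11_general β hβ h₀ hh₀ y hy hpos hrel
end

section
/- Let β ∈ ℝ with β ≠ 0, let h₀ : ℝ → ℝ, and let y ∈ ℝ; write h := h₀(y). The function x(t) := y + [(e^{−β h} − β t)·ln(e^{−β h} − β t) + β t + β h e^{−β h}]/β², defined for all t with e^{−β h} − β t > 0, satisfies x(0) = y and x'(t) = −ln(e^{−β h} − β t)/β at every t with e^{−β h} − β t > 0. -/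
open Real

theorem hasDerivAt_sub_mul_log_sub_add (c β t : ℝ) (ht : c - β * t ≠ 0) :
    HasDerivAt (fun τ => (c - β * τ) * log (c - β * τ) + β * τ) (-β * log (c - β * t)) t := by
  have affine : HasDerivAt (fun τ => c - β * τ) (-β) t := by
    simpa using ((hasDerivAt_id t).const_mul β).const_sub c
  refine (((hasDerivAt_mul_log ht).comp t affine).add ((hasDerivAt_id t).const_mul β)).congr_deriv ?_
  ring

theorem mul_div_sq_eq_div {K : Type*} [Field K] (a b : K) : a * b / a ^ 2 = b / a := by
  rcases eq_or_ne a 0 with rfl | ha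
  · simp
  · field_simp

theorem stmt_13_general (β : ℝ) (h₀ : ℝ → ℝ) (y : ℝ) :
    y + ((Real.exp (-β * h₀ y) - β * 0) * Real.log (Real.exp (-β * h₀ y) - β * 0)
        + β * 0 + β * h₀ y * Real.exp (-β * h₀ y)) / β ^ 2 = y ∧
      ∀ t : ℝ, Real.exp (-β * h₀ y) - β * t > 0 →
        deriv (fun τ => y +
            ((Real.exp (-β * h₀ y) - β * τ) * Real.log (Real.exp (-β * h₀ y) - β * τ)
              + β * τ + β * h₀ y * Real.exp (-β * h₀ y)) / β ^ 2) t
          = -Real.log (Real.exp (-β * h₀ y) - β * t) / β := by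
  refine ⟨by simp only [mul_zero, sub_zero, add_zero, log_exp]; ring, fun t ht => ?_⟩
  have hx := (((hasDerivAt_sub_mul_log_sub_add _ β t ht.ne').add_const
    (β * h₀ y * exp (-β * h₀ y))).div_const (β ^ 2)).const_add y
  rw [hx.deriv, neg_mul, neg_div, mul_div_sq_eq_div, neg_div]

/-- Section 6, characteristic ODE: with `h = h₀ y`, the curve
`x(t) = y + ((e^{-βh} - βt) ln(e^{-βh} - βt) + βt + βh e^{-βh})/β²` satisfies
`x 0 = y` and `x' t = -ln(e^{-βh} - βt)/β` wherever `e^{-βh} - βt > 0`. -/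
theorem stmt_13 (β : ℝ) (hβ : β ≠ 0) (h₀ : ℝ → ℝ) (y : ℝ) :
    y + ((Real.exp (-β * h₀ y) - β * 0) * Real.log (Real.exp (-β * h₀ y) - β * 0)
        + β * 0 + β * h₀ y * Real.exp (-β * h₀ y)) / β ^ 2 = y ∧
      ∀ t : ℝ, Real.exp (-β * h₀ y) - β * t > 0 →
        deriv (fun τ => y +
            ((Real.exp (-β * h₀ y) - β * τ) * Real.log (Real.exp (-β * h₀ y) - β * τ)
              + β * τ + β * h₀ y * Real.exp (-β * h₀ y)) / β ^ 2) t
          = -Real.log (Real.exp (-β * h₀ y) - β * t) / β :=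
  stmt_13_general β h₀ y
end
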